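/- Let Z be a multimatroid with a non-singular element u, and let ω be a skew class of Z|u. Then B is a basis of Z|u if and only if B ∪ {u} is a basis of Z. Moreover, if B is a basis of Z|u, then the fundamental circuit C_Z(B∪{u}, ω) exists if and only if C_{Z|u}(B, ω) exists, and when both exist, C_{Z|u}(B, ω) = C_Z(B∪{u}, ω) − {u}. -/
import Mathlib


open Finset

variable {U ι : Type}

section Defs
variable [DecidableEq U] [Fintype U] [DecidableEq ι] [Fintype ι]

/-- `S` is a subtransversal: it meets each skew class at most once.
Skew classes are the fibers of `cls : U → ι`. -/
def Subtransversal (cls : U → ι) (S : Finset U) : Prop :=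
  Set.InjOn cls ↑S

/-- The skew class with index `i`, as a finset. -/
def skewClass (cls : U → ι) (i : ι) : Finset U :=
  Finset.univ.filter (fun x => cls x = i)

/-- `T` is a transversal: it meets each skew class exactly once. -/
def Transversal (cls : U → ι) (T : Finset U) : Prop :=
  Subtransversal cls T ∧ ∀ i : ι, ∃ x ∈ T, cls x = i

/-- The multimatroid rank axioms for a rank function `r` on the carrier given by
`cls : U → ι` (whose fibers, assumed nonempty, are the skew classes).
The first three fields express axiom (R1) (each transversal carries a matroid),
and `axiomR2` is axiom (R2). -/
structure IsMultimatroid (cls : U → ι) (r : Finset U → ℕ) : Prop where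
  cls_surj : Function.Surjective cls
  rank_le_card : ∀ S, Subtransversal cls S → r S ≤ S.card
  mono : ∀ S T, Subtransversal cls T → S ⊆ T → r S ≤ r T
  submod : ∀ S T, Subtransversal cls (S ∪ T) → r (S ∪ T) + r (S ∩ T) ≤ r S + r T
  axiomR2 : ∀ S, ∀ x y : U, Subtransversal cls S → cls x = cls y → x ≠ y →
    (∀ u ∈ S, cls u ≠ cls x) →
    2 * r S + 1 ≤ r (insert x S) + r (insert y S)

/-- An independent set of the multimatroid. -/
def Indep (cls : U → ι) (r : Finset U → ℕ) (S : Finset U) : Prop :=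
  Subtransversal cls S ∧ r S = S.card

/-- A basis: a maximal independent subtransversal. -/
def MMBasis (cls : U → ι) (r : Finset U → ℕ) (B : Finset U) : Prop :=
  Indep cls r B ∧ ∀ S, Indep cls r S → B ⊆ S → S = B

/-- A circuit: a minimal dependent subtransversal. -/
def Circuit (cls : U → ι) (r : Finset U → ℕ) (C : Finset U) : Prop :=
  Subtransversal cls C ∧ r C < C.card ∧ ∀ D ⊂ C, ¬ r D < D.card

/-- Non-degenerate: every skew class has at least two elements. -/
def Nondegenerate (cls : U → ι) : Prop :=
  ∀ i : ι, 2 ≤ (skewClass cls i).card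

/-- An element is singular if its singleton has rank `0`. -/
def Singular (r : Finset U → ℕ) (e : U) : Prop := r {e} = 0

end Defs

section Order
variable [DecidableEq U] [Fintype U] [DecidableEq ι] [Fintype ι] [LinearOrder ι]

/-- The skew class `i` is active with respect to the transversal `T` (in
particular, with respect to a basis): there is a circuit `C` with
`C − ω_i ⊆ T` whose `≺`-least element lies in the class `i`. -/
def Active (cls : U → ι) (r : Finset U → ℕ) (T : Finset U) (i : ι) : Prop :=
  ∃ C, Circuit cls r C ∧ C \ skewClass cls i ⊆ T ∧
    ∃ m ∈ C, cls m = i ∧ ∀ x ∈ C, i ≤ cls x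

end Order

section Minor
variable [DecidableEq U] [Fintype U] [DecidableEq ι] [Fintype ι]

/-- Independence in the elementary minor `Z|u`, whose rank function is
`S ↦ r (S ∪ {u}) - r {u}` (here `r {u} = 1` as `u` is non-singular). -/
def IndepMinor (cls : U → ι) (r : Finset U → ℕ) (u : U) (S : Finset U) : Prop :=
  (∀ x ∈ S, cls x ≠ cls u) ∧ Subtransversal cls S ∧ r (insert u S) = S.card + 1

/-- Bases of the elementary minor `Z|u`. -/
def BasisMinor (cls : U → ι) (r : Finset U → ℕ) (u : U) (B : Finset U) : Prop :=
  IndepMinor cls r u B ∧ ∀ S, IndepMinor cls r u S → B ⊆ S → S = B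

/-- Circuits of the elementary minor `Z|u`. -/
def CircuitMinor (cls : U → ι) (r : Finset U → ℕ) (u : U) (C : Finset U) : Prop :=
  (∀ x ∈ C, cls x ≠ cls u) ∧ Subtransversal cls C ∧ r (insert u C) < C.card + 1 ∧
    ∀ D ⊂ C, ¬ r (insert u D) < D.card + 1

end Minor

section Helpers
variable [DecidableEq U] [Fintype U] [DecidableEq ι] [Fintype ι]
variable {cls : U → ι} {r : Finset U → ℕ}

lemma subtr_mono {S T : Finset U} (h : Subtransversal cls T) (hst : S ⊆ T) :
    Subtransversal cls S :=
  Set.InjOn.mono (Finset.coe_subset.2 hst) h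

lemma subtr_singleton (cls : U → ι) (x : U) : Subtransversal cls {x} := by
  intro a ha b hb _
  simp only [coe_singleton, Set.mem_singleton_iff] at ha hb
  rw [ha, hb]

lemma subtr_insert {S : Finset U} {a : U} (hS : Subtransversal cls S)
    (h : ∀ x ∈ S, cls x ≠ cls a) : Subtransversal cls (insert a S) := by
  intro x hx y hy hxy
  simp only [coe_insert, Set.mem_insert_iff, mem_coe] at hx hy
  rcases hx with hx | hx <;> rcases hy with hy | hy
  · rw [hx, hy]
  · subst hx; exact absurd hxy.symm (h y hy)
  · subst hy; exact absurd hxy (h x hx)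
  · exact hS (mem_coe.2 hx) (mem_coe.2 hy) hxy

lemma rank_insert_le (hM : IsMultimatroid cls r) {S : Finset U} {x : U}
    (h : Subtransversal cls (insert x S)) : r (insert x S) ≤ r S + 1 := by
  have h1 := hM.submod {x} S (by rwa [← insert_eq])
  have h2 : r {x} ≤ 1 := by
    have := hM.rank_le_card {x} (subtr_singleton cls x)
    simpa using this
  rw [← insert_eq] at h1
  omega

lemma rank_diff (hM : IsMultimatroid cls r) {T : Finset U} (hT : Subtransversal cls T) :
    ∀ n, ∀ S ⊆ T, (T \ S).card = n → r T + S.card ≤ r S + T.card := by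
  intro n
  induction n with
  | zero =>
    intro S hST h0
    have : S = T := by
      apply subset_antisymm hST
      intro x hx
      by_contra hxS
      have hmem : x ∈ T \ S := mem_sdiff.2 ⟨hx, hxS⟩
      rw [Finset.card_eq_zero] at h0
      rw [h0] at hmem
      exact absurd hmem (notMem_empty x)
    rw [this]
  | succ n ih =>
    intro S hST hc
    have hne : (T \ S).Nonempty := by
      rw [← Finset.card_pos, hc]; omega
    obtain ⟨x, hx⟩ := hne
    have hxT : x ∈ T := (mem_sdiff.1 hx).1
    have hxS : x ∉ S := (mem_sdiff.1 hx).2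
    have hsub : insert x S ⊆ T := insert_subset hxT hST
    have h1 : r (insert x S) ≤ r S + 1 := rank_insert_le hM (subtr_mono hT hsub)
    have hcount : (T \ insert x S).card = n := by
      have : T \ insert x S = (T \ S).erase x := by
        ext y
        simp only [mem_sdiff, mem_insert, mem_erase, not_or]
        tauto
      rw [this, card_erase_of_mem hx, hc]
      omega
    have h2 := ih (insert x S) hsub hcount
    rw [card_insert_of_notMem hxS] at h2
    omega

lemma rank_diff' (hM : IsMultimatroid cls r) {T S : Finset U} (hT : Subtransversal cls T)
    (hST : S ⊆ T) : r T + S.card ≤ r S + T.card :=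
  rank_diff hM hT _ S hST rfl

lemma indep_subset (hM : IsMultimatroid cls r) {S T : Finset U} (hT : Subtransversal cls T)
    (hST : S ⊆ T) (hr : r T = T.card) : r S = S.card := by
  have h1 := rank_diff' hM hT hST
  have h2 := hM.rank_le_card S (subtr_mono hT hST)
  have h3 := card_le_card hST
  omega

lemma exists_circuit (hM : IsMultimatroid cls r) :
    ∀ S : Finset U, Subtransversal cls S → r S < S.card → ∃ C ⊆ S, Circuit cls r C := by
  intro S
  induction S using Finset.strongInduction with
  | _ S ih =>
    intro hS hdep
    by_cases h : ∀ D ⊂ S, ¬ r D < D.card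
    · exact ⟨S, subset_rfl, hS, hdep, h⟩
    · push_neg at h
      obtain ⟨D, hDS, hD⟩ := h
      obtain ⟨C, hCD, hC⟩ := ih D hDS (subtr_mono hS hDS.subset) hD
      exact ⟨C, hCD.trans hDS.subset, hC⟩

lemma exists_circuitMinor (hM : IsMultimatroid cls r) (u : U) :
    ∀ S : Finset U, (∀ x ∈ S, cls x ≠ cls u) → Subtransversal cls S →
      r (insert u S) < S.card + 1 → ∃ C ⊆ S, CircuitMinor cls r u C := by
  intro S
  induction S using Finset.strongInduction with
  | _ S ih =>
    intro hdisj hsub hdep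
    by_cases h : ∀ D ⊂ S, ¬ r (insert u D) < D.card + 1
    · exact ⟨S, subset_rfl, hdisj, hsub, hdep, h⟩
    · push_neg at h
      obtain ⟨D, hDS, hD⟩ := h
      obtain ⟨C, hCD, hC⟩ := ih D hDS (fun x hx => hdisj x (hDS.subset hx))
        (subtr_mono hsub hDS.subset) hD
      exact ⟨C, hCD.trans hDS.subset, hC⟩

lemma circuit_rank (hM : IsMultimatroid cls r) {C : Finset U} (hC : Circuit cls r C) :
    r C + 1 = C.card := by
  obtain ⟨hsub, hdep, hmin⟩ := hC
  have hne : C.Nonempty := by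
    rw [← Finset.card_pos]; omega
  obtain ⟨x, hx⟩ := hne
  have hss : C.erase x ⊂ C := erase_ssubset hx
  have h1 := hmin _ hss
  have h2 := hM.rank_le_card (C.erase x) (subtr_mono hsub hss.subset)
  have h3 := hM.mono _ _ hsub hss.subset
  have h4 := card_erase_add_one hx
  omega

lemma indepMinor_iff_indep (hM : IsMultimatroid cls r) {u : U} {B : Finset U}
    (hB : ∀ x ∈ B, cls x ≠ cls u) :
    IndepMinor cls r u B ↔ Indep cls r (insert u B) := by
  have huB : u ∉ B := fun h => hB u h rfl
  constructor
  · rintro ⟨_, h2, h3⟩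
    refine ⟨subtr_insert h2 hB, ?_⟩
    rw [card_insert_of_notMem huB]
    exact h3
  · rintro ⟨h1, h2⟩
    refine ⟨hB, subtr_mono h1 (subset_insert _ _), ?_⟩
    rw [h2, card_insert_of_notMem huB]

lemma fund_unique (hM : IsMultimatroid cls r) {A : Finset U}
    (hA : Subtransversal cls A) (hAr : r A = A.card) (i : ι)
    {C1 C2 : Finset U} (h1 : Circuit cls r C1) (h2 : Circuit cls r C2)
    (hs1 : C1 ⊆ A ∪ skewClass cls i) (hs2 : C2 ⊆ A ∪ skewClass cls i) : C1 = C2 := by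
  by_contra hne
  have struct : ∀ C, Circuit cls r C → C ⊆ A ∪ skewClass cls i →
      ∃ x ∈ C, x ∉ A ∧ cls x = i ∧ ∀ y ∈ C, y ≠ x → (y ∈ A ∧ cls y ≠ i) := by
    intro C hC hCs
    have hnsub : ¬ C ⊆ A := by
      intro h
      have := indep_subset hM hA h hAr
      have := hC.2.1
      omega
    obtain ⟨x, hxC, hxA⟩ := Finset.not_subset.1 hnsub
    have hxi : cls x = i := by
      rcases mem_union.1 (hCs hxC) with h | h
      · exact absurd h hxA
      · simpa [skewClass] using h
    refine ⟨x, hxC, hxA, hxi, ?_⟩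
    intro y hyC hyx
    have hyi : cls y ≠ i := by
      intro h
      exact hyx (hC.1 (mem_coe.2 hyC) (mem_coe.2 hxC) (h.trans hxi.symm))
    rcases mem_union.1 (hCs hyC) with h | h
    · exact ⟨h, hyi⟩
    · exact absurd (by simpa [skewClass] using h) hyi
  obtain ⟨x1, hx1C, hx1A, hx1i, hC1y⟩ := struct C1 h1 hs1
  obtain ⟨x2, hx2C, hx2A, hx2i, hC2y⟩ := struct C2 h2 hs2
  have hr1 := circuit_rank hM h1
  have hr2 := circuit_rank hM h2
  by_cases hxx : x1 = x2
  · -- same element of the skew class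
    subst hxx
    have key : ∀ z ∈ C1 ∪ C2, z = x1 ∨ (z ∈ A ∧ cls z ≠ i) := by
      intro z hz
      rcases mem_union.1 hz with h | h
      · rcases eq_or_ne z x1 with h' | h'
        · exact Or.inl h'
        · exact Or.inr (hC1y z h h')
      · rcases eq_or_ne z x1 with h' | h'
        · exact Or.inl h'
        · exact Or.inr (hC2y z h h')
    have hVsub : Subtransversal cls (C1 ∪ C2) := by
      intro a ha b hb hab
      rcases key a (mem_coe.1 ha) with ha' | ⟨haA, hai⟩ <;>
        rcases key b (mem_coe.1 hb) with hb' | ⟨hbA, hbi⟩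
      · rw [ha', hb']
      · exfalso; apply hbi; rw [← hab, ha', hx1i]
      · exfalso; apply hai; rw [hab, hb', hx1i]
      · exact hA (mem_coe.2 haA) (mem_coe.2 hbA) hab
    have hi12 : r (C1 ∩ C2) = (C1 ∩ C2).card := by
      have hproper : C1 ∩ C2 ≠ C1 := by
        intro h
        have hsub12 : C1 ⊆ C2 := by rw [← h]; exact inter_subset_right
        exact h2.2.2 C1 (lt_of_le_of_ne hsub12 hne) h1.2.1
      have hmin := h1.2.2 (C1 ∩ C2) (ssubset_of_subset_of_ne inter_subset_left hproper)
      have hle := hM.rank_le_card (C1 ∩ C2) (subtr_mono h1.1 inter_subset_left)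
      omega
    have hsubmod := hM.submod C1 C2 hVsub
    have hmono : r ((C1 ∪ C2).erase x1) ≤ r (C1 ∪ C2) :=
      hM.mono _ _ hVsub (erase_subset _ _)
    have hindE : r ((C1 ∪ C2).erase x1) = ((C1 ∪ C2).erase x1).card := by
      apply indep_subset hM hA ?_ hAr
      intro z hz
      rcases key z (mem_of_mem_erase hz) with h | ⟨hzA, _⟩
      · exact absurd h (mem_erase.1 hz).1
      · exact hzA
    have hcard := card_erase_add_one (mem_union_left C2 hx1C)
    have hcardVi := card_union_add_card_inter C1 C2
    omega
  · -- different elements of the skew class: use axiom R2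
    have hSA : C1.erase x1 ∪ C2.erase x2 ⊆ A := by
      intro z hz
      rcases mem_union.1 hz with h | h
      · exact (hC1y z (mem_of_mem_erase h) (mem_erase.1 h).1).1
      · exact (hC2y z (mem_of_mem_erase h) (mem_erase.1 h).1).1
    have hSi : ∀ z ∈ C1.erase x1 ∪ C2.erase x2, cls z ≠ i := by
      intro z hz
      rcases mem_union.1 hz with h | h
      · exact (hC1y z (mem_of_mem_erase h) (mem_erase.1 h).1).2
      · exact (hC2y z (mem_of_mem_erase h) (mem_erase.1 h).1).2
    have hSsub : Subtransversal cls (C1.erase x1 ∪ C2.erase x2) := subtr_mono hA hSA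
    have hSr : r (C1.erase x1 ∪ C2.erase x2) = (C1.erase x1 ∪ C2.erase x2).card :=
      indep_subset hM hA hSA hAr
    have hR2 := hM.axiomR2 (C1.erase x1 ∪ C2.erase x2) x1 x2 hSsub
      (hx1i.trans hx2i.symm) hxx
      (fun v hv => by rw [hx1i]; exact hSi v hv)
    have hb : ∀ x C', Circuit cls r C' → x ∈ C' → cls x = i → x ∉ A →
        r C' + 1 = C'.card → C'.erase x ⊆ C1.erase x1 ∪ C2.erase x2 →
        r (insert x (C1.erase x1 ∪ C2.erase x2)) ≤ (C1.erase x1 ∪ C2.erase x2).card := by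
      intro x C' hC' hxC' hxi' hxA' hr' hsub'
      have hxS : x ∉ C1.erase x1 ∪ C2.erase x2 := fun h => hxA' (hSA h)
      have hsubT : Subtransversal cls (insert x (C1.erase x1 ∪ C2.erase x2)) :=
        subtr_insert hSsub (fun z hz => by rw [hxi']; exact hSi z hz)
      have hC'sub : C' ⊆ insert x (C1.erase x1 ∪ C2.erase x2) := by
        intro z hz
        rcases eq_or_ne z x with h | h
        · rw [h]; exact mem_insert_self _ _
        · exact mem_insert_of_mem (hsub' (mem_erase.2 ⟨h, hz⟩))
      have hd := rank_diff' hM hsubT hC'sub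
      rw [card_insert_of_notMem hxS] at hd
      omega
    have hb1 := hb x1 C1 h1 hx1C hx1i hx1A hr1
      (fun z hz => mem_union_left _ hz)
    have hb2 := hb x2 C2 h2 hx2C hx2i hx2A hr2
      (fun z hz => mem_union_right _ hz)
    omega

end Helpers

/-- bases and fundamental circuits in an elementary minor `Z|u` for a
non-singular element `u` and a skew class `i` of `Z|u`. -/
theorem stmt_8 [DecidableEq U] [Fintype U] [DecidableEq ι] [Fintype ι]
    (cls : U → ι) (r : Finset U → ℕ) (hM : IsMultimatroid cls r)
    (u : U) (hu : r {u} = 1) (i : ι) (hi : i ≠ cls u) :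
    (∀ B : Finset U, (∀ x ∈ B, cls x ≠ cls u) →
        (BasisMinor cls r u B ↔ MMBasis cls r (insert u B))) ∧
    ∀ B : Finset U, BasisMinor cls r u B →
      (((∃ C, CircuitMinor cls r u C ∧ C ⊆ B ∪ skewClass cls i) ↔
          (∃ C, Circuit cls r C ∧ C ⊆ insert u B ∪ skewClass cls i)) ∧
        ∀ C C' : Finset U, CircuitMinor cls r u C → C ⊆ B ∪ skewClass cls i →
          Circuit cls r C' → C' ⊆ insert u B ∪ skewClass cls i → C = C'.erase u) := by
  have hmemω : ∀ x : U, x ∈ skewClass cls i ↔ cls x = i := by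
    intro x; simp [skewClass]
  have hωu : ∀ x ∈ skewClass cls i, cls x ≠ cls u := fun x hx => by
    rw [(hmemω x).1 hx]; exact hi
  constructor
  · -- Part 1: bases correspondence
    intro B hB
    have huB : u ∉ B := fun h => hB u h rfl
    constructor
    · rintro ⟨hind, hmax⟩
      refine ⟨(indepMinor_iff_indep hM hB).1 hind, ?_⟩
      intro S hS hsub
      have huS : u ∈ S := hsub (mem_insert_self u B)
      have hS'1 : ∀ x ∈ S.erase u, cls x ≠ cls u := by
        intro x hx h
        exact (mem_erase.1 hx).1
          (hS.1 (mem_coe.2 (mem_of_mem_erase hx)) (mem_coe.2 huS) h)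
      have hins : insert u (S.erase u) = S := insert_erase huS
      have hSm : IndepMinor cls r u (S.erase u) := by
        refine ⟨hS'1, subtr_mono hS.1 (erase_subset _ _), ?_⟩
        rw [hins, hS.2, ← card_erase_add_one huS]
      have hBS : B ⊆ S.erase u := by
        intro x hx
        exact mem_erase.2 ⟨fun h => hB x hx (h ▸ rfl), hsub (mem_insert_of_mem hx)⟩
      have hSB := hmax _ hSm hBS
      rw [← hins, hSB]
    · rintro ⟨hind, hmax⟩
      refine ⟨(indepMinor_iff_indep hM hB).2 hind, ?_⟩
      intro S hS hsub
      have hIndS : Indep cls r (insert u S) := (indepMinor_iff_indep hM hS.1).1 hS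
      have h2 : insert u S = insert u B := hmax _ hIndS (insert_subset_insert _ hsub)
      apply subset_antisymm ?_ hsub
      intro x hx
      have hx' : x ∈ insert u B := h2 ▸ mem_insert_of_mem hx
      rcases mem_insert.1 hx' with h | h
      · exact absurd (h ▸ rfl) (hS.1 x hx)
      · exact h
  · -- Part 2: fundamental circuits
    intro B hBmin
    obtain ⟨hBind, hBmax⟩ := hBmin
    obtain ⟨hBdisj, hBsub, hBr⟩ := hBind
    have huB : u ∉ B := fun h => hBdisj u h rfl
    have hA_sub : Subtransversal cls (insert u B) := subtr_insert hBsub hBdisj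
    have hA_r : r (insert u B) = (insert u B).card := by
      rw [card_insert_of_notMem huB]; exact hBr
    have hBωu : ∀ x ∈ B ∪ skewClass cls i, cls x ≠ cls u := by
      intro x hx
      rcases mem_union.1 hx with h | h
      · exact hBdisj x h
      · exact hωu x h
    have hins_sub : insert u (B ∪ skewClass cls i) = insert u B ∪ skewClass cls i :=
      (insert_union u B (skewClass cls i)).symm
    have K1 : ∀ C, CircuitMinor cls r u C → C ⊆ B ∪ skewClass cls i →
        ∃ D, Circuit cls r D ∧ D ⊆ insert u C := by
      intro C hC hCsub
      obtain ⟨hCdisj, hCsub', hCdep, _⟩ := hC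
      have huC : u ∉ C := fun h => hCdisj u h rfl
      have hsubT : Subtransversal cls (insert u C) := subtr_insert hCsub' hCdisj
      have hdep : r (insert u C) < (insert u C).card := by
        rw [card_insert_of_notMem huC]; exact hCdep
      obtain ⟨D, hDsub, hD⟩ := exists_circuit hM _ hsubT hdep
      exact ⟨D, hD, hDsub⟩
    have K2 : ∀ C', Circuit cls r C' → C' ⊆ insert u B ∪ skewClass cls i →
        C'.erase u ⊆ B ∪ skewClass cls i ∧
        r (insert u (C'.erase u)) < (C'.erase u).card + 1 := by
      intro C' hC' hsub'
      have hEsub : C'.erase u ⊆ B ∪ skewClass cls i := by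
        intro x hx
        have hxu : x ≠ u := (mem_erase.1 hx).1
        rcases mem_union.1 (hsub' (mem_of_mem_erase hx)) with h | h
        · rcases mem_insert.1 h with h' | h'
          · exact absurd h' hxu
          · exact mem_union_left _ h'
        · exact mem_union_right _ h
      refine ⟨hEsub, ?_⟩
      have hrk := circuit_rank hM hC'
      by_cases huC' : u ∈ C'
      · rw [insert_erase huC']
        have := card_erase_add_one huC'
        omega
      · rw [erase_eq_of_notMem huC']
        have hC'disj : ∀ x ∈ C', cls x ≠ cls u := by
          intro x hx
          exact hBωu x (by
            rw [← erase_eq_of_notMem huC'] at hx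
            exact hEsub hx)
        have hsubT : Subtransversal cls (insert u C') := subtr_insert hC'.1 hC'disj
        have := rank_insert_le hM hsubT
        omega
    constructor
    · constructor
      · rintro ⟨C, hC, hCsub⟩
        obtain ⟨D, hD, hDsub⟩ := K1 C hC hCsub
        refine ⟨D, hD, ?_⟩
        intro x hx
        rw [← hins_sub]
        exact (insert_subset_insert u hCsub) (hDsub hx)
      · rintro ⟨C', hC', hsub'⟩
        obtain ⟨hEsub, hEdep⟩ := K2 C' hC' hsub'
        obtain ⟨C, hCsub, hC⟩ := exists_circuitMinor hM u (C'.erase u)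
          (fun x hx => hBωu x (hEsub hx))
          (subtr_mono hC'.1 (erase_subset _ _)) hEdep
        exact ⟨C, hC, hCsub.trans hEsub⟩
    · intro C C' hC hCsub hC' hsub'
      obtain ⟨D, hD, hDsub⟩ := K1 C hC hCsub
      have hDsub' : D ⊆ insert u B ∪ skewClass cls i := by
        intro x hx
        rw [← hins_sub]
        exact (insert_subset_insert u hCsub) (hDsub hx)
      have hDC' : D = C' := fund_unique hM hA_sub hA_r i hD hC' hDsub' hsub'
      rw [hDC'] at hDsub
      have hEC : C'.erase u ⊆ C := by
        intro x hx
        rcases mem_insert.1 (hDsub (mem_of_mem_erase hx)) with h | h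
        · exact absurd h (mem_erase.1 hx).1
        · exact h
      obtain ⟨hEsub, hEdep⟩ := K2 C' hC' hsub'
      by_contra hne
      exact hC.2.2.2 (C'.erase u) (ssubset_of_subset_of_ne hEC (fun h => hne h.symm)) hEdep
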